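/- arXiv:2502.19921 — 2 statements merged into one kernel-verified Lean document; each statement's English description precedes it below -/
import Mathlib

section
/- Guarantees for shift-invariancy: let T > 0, let f : AddCircle T → ℂ be integrable with c₁(f) ≠ 0, let φₐ : ℝ, and let t' : ℝ. Define the shifted signal g : AddCircle T → ℂ by g(x) := f(x − ↑t'). Then 𝒯(g, φₐ) = 𝒯(f, φₐ) as functions AddCircle T → ℂ; i.e., applying the transformation with the same angle φₐ to a signal and to any circularly shifted variant of it yields the identical signal. -/
/-!
A circular shift by `t` multiplies `c₁` by `e^{-2πit/T}`, i.e. rotates `arg c₁` by `-2πt/T`.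
Modulo `T`, the shift amount `Δφ(f, φ)` is `(arg c₁(f) - φ) · T / 2π` (both branches of its
definition agree modulo `T`), so `Δφ(g, φ) ≡ Δφ(f, φ) - t`, and the two shifts cancel.
-/

open MeasureTheory

/-- `theta T f φ` is the representative in `[0, 2π)` of `arg (c₁ f) − φ` modulo `2π`. -/
noncomputable def theta (T : ℝ) [Fact (0 < T)] (f : AddCircle T → ℂ) (φ : ℝ) : ℝ :=
  toIcoMod Real.two_pi_pos 0 (Complex.arg (fourierCoeff f 1) - φ)

/-- The computed time-shift amount `Δφ(f, φ)`. -/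
noncomputable def deltaPhi (T : ℝ) [Fact (0 < T)] (f : AddCircle T → ℂ) (φ : ℝ) : ℝ :=
  if theta T f φ > Real.pi then (theta T f φ - 2 * Real.pi) * T / (2 * Real.pi)
  else theta T f φ * T / (2 * Real.pi)

/-- The transformation `𝒯(f, φ)`: circularly shift `f` by `Δφ(f, φ)`. -/
noncomputable def transf (T : ℝ) [Fact (0 < T)] (f : AddCircle T → ℂ) (φ : ℝ) :
    AddCircle T → ℂ :=
  fun x => f (x - (deltaPhi T f φ : AddCircle T))

open Complex Real

namespace AddCircle

variable {T : ℝ}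

noncomputable abbrev toAngle (hT : T ≠ 0) : AddCircle T ≃+ Angle :=
  equivAddCircle T (2 * π) hT two_pi_pos.ne'

theorem arg_toCircle (hT : T ≠ 0) (x : AddCircle T) :
    (arg (toCircle x) : Angle) = toAngle hT x := by
  rw [← homeomorphCircle_apply hT]
  exact Angle.arg_toCircle _

theorem fourier_add_apply (n : ℤ) (x y : AddCircle T) :
    fourier n (x + y) = fourier n x * fourier n y := by
  rw [fourier_apply, fourier_apply, fourier_apply, smul_add, toCircle_add, Circle.coe_mul]

theorem arg_fourier_neg_one (hT : T ≠ 0) (x : AddCircle T) :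
    (arg (fourier (-1) x) : Angle) = -toAngle hT x := by
  rw [fourier_apply, neg_smul, one_smul, arg_toCircle hT, map_neg]

end AddCircle

theorem fourierCoeff_comp_sub {T : ℝ} [Fact (0 < T)] {E : Type*} [NormedAddCommGroup E]
    [NormedSpace ℂ E] (f : AddCircle T → E) (t : AddCircle T) (n : ℤ) :
    fourierCoeff (fun x => f (x - t)) n = fourier (-n) t • fourierCoeff f n := by
  have h (x : AddCircle T) : fourier (-n) x • f (x - t)
      = fourier (-n) t • (fourier (-n) (x - t) • f (x - t)) := by
    rw [smul_smul, ← AddCircle.fourier_add_apply, add_sub_cancel]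
  simp only [fourierCoeff, h, integral_smul]
  rw [integral_sub_right_eq_self (fun x => fourier (-n) x • f x) t]

section ShiftAmount

variable {T : ℝ} [Fact (0 < T)]

theorem coe_theta (f : AddCircle T → ℂ) (φ : ℝ) :
    (theta T f φ : Angle) = arg (fourierCoeff f 1) - φ := by
  rw [theta, Angle.coe_toIcoMod, Angle.coe_sub]

theorem coe_deltaPhi (f : AddCircle T → ℂ) (φ : ℝ) :
    (deltaPhi T f φ : AddCircle T) =
      (AddCircle.toAngle (Fact.out : 0 < T).ne').symm (arg (fourierCoeff f 1) - φ) := by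
  have hπ : 2 * π ≠ 0 := two_pi_pos.ne'
  have rescale (θ : ℝ) : ((θ * T / (2 * π) : ℝ) : AddCircle T) =
      (AddCircle.toAngle (Fact.out : 0 < T).ne').symm θ :=
    congrArg ((↑) : ℝ → AddCircle T) (by ring : θ * T / (2 * π) = θ * ((2 * π)⁻¹ * T))
  rw [← coe_theta, ← rescale, deltaPhi]
  split_ifs
  · rw [sub_mul, sub_div, mul_div_cancel_left₀ T hπ, AddCircle.coe_sub, AddCircle.coe_period,
      sub_zero]
  · rfl

theorem coe_deltaPhi_comp_sub (f : AddCircle T → ℂ) (hc : fourierCoeff f 1 ≠ 0) (φ : ℝ)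
    (t : AddCircle T) :
    (deltaPhi T (fun x => f (x - t)) φ : AddCircle T) = deltaPhi T f φ - t := by
  have hT : T ≠ 0 := (Fact.out : 0 < T).ne'
  rw [coe_deltaPhi, coe_deltaPhi, fourierCoeff_comp_sub, smul_eq_mul,
    arg_mul_coe_angle (by simp) hc, AddCircle.arg_fourier_neg_one hT]
  simp only [map_sub, map_add, map_neg, AddEquiv.symm_apply_apply]
  abel

end ShiftAmount

theorem transf_shift_invariant_general (T : ℝ) [Fact (0 < T)] (f : AddCircle T → ℂ)
    (hc : fourierCoeff f 1 ≠ 0) (φₐ t' : ℝ) :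
    transf T (fun x => f (x - (t' : AddCircle T))) φₐ = transf T f φₐ := by
  funext x
  simp only [transf, coe_deltaPhi_comp_sub f hc, sub_sub, sub_add_cancel]

/-- Guarantees for shift-invariancy: applying the transformation with the same angle `φₐ`
to a signal and to any circularly shifted variant of it yields the identical signal. -/
theorem transf_shift_invariant (T : ℝ) [Fact (0 < T)] (f : AddCircle T → ℂ)
    (hf : Integrable f AddCircle.haarAddCircle) (hc : fourierCoeff f 1 ≠ 0)
    (φₐ t' : ℝ) :
    transf T (fun x => f (x - (t' : AddCircle T))) φₐ = transf T f φₐ :=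
  transf_shift_invariant_general T f hc φₐ t'
end

section
/- Surjectivity of the transformation onto the shift orbit (surjection part of Theorem 1): let T > 0 and let f : AddCircle T → ℂ be integrable with c₁(f) ≠ 0. Then {g : AddCircle T → ℂ | ∃ φ : ℝ, g = 𝒯(f, φ)} = {g : AddCircle T → ℂ | ∃ t' : ℝ, ∀ x, g x = f (x − ↑t')}; i.e., the outputs of the transformation over all angles are exactly the circular translates of f, so every shifted variant of f is realized by some phase angle φ. -/
/-! Modulo `T`, the shift `Δφ(f, φ)` is `θ(f, φ) · T / (2π)`, and `θ(f, φ) ≡ arg c₁(f) − φ`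
modulo `2π`. Hence the angle `φ = arg c₁(f) − 2π t' / T` gives `Δφ(f, φ) ≡ t'` modulo `T`, so every
circular translate of `f` is an output of the transformation. -/

open MeasureTheory

lemma AddCircle.coe_toIcoMod_mul_div {T p : ℝ} (hp : 0 < p) (a x : ℝ) :
    ((toIcoMod hp a x * T / p : ℝ) : AddCircle T) = ((x * T / p : ℝ) : AddCircle T) := by
  have hrescale : toIcoMod hp a x * T / p = x * T / p - toIcoDiv hp a x • T := by
    rw [toIcoMod, zsmul_eq_mul, zsmul_eq_mul]
    field_simp
  rw [hrescale, AddCircle.coe_sub, AddCircle.coe_zsmul, AddCircle.coe_period, smul_zero,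
    sub_zero]

lemma coe_deltaPhi_s16 (T : ℝ) [Fact (0 < T)] (f : AddCircle T → ℂ) (φ : ℝ) :
    ((deltaPhi T f φ : ℝ) : AddCircle T) =
      ((theta T f φ * T / (2 * Real.pi) : ℝ) : AddCircle T) := by
  unfold deltaPhi
  split_ifs
  · have hshift : (theta T f φ - 2 * Real.pi) * T / (2 * Real.pi)
        = theta T f φ * T / (2 * Real.pi) - T := by
      field_simp [Real.pi_ne_zero]
    rw [hshift, AddCircle.coe_sub, AddCircle.coe_period, sub_zero]
  · rfl

lemma theta_arg_sub (T : ℝ) [Fact (0 < T)] (f : AddCircle T → ℂ) (ψ : ℝ) :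
    theta T f (Complex.arg (fourierCoeff f 1) - ψ) = toIcoMod Real.two_pi_pos 0 ψ := by
  rw [theta, sub_sub_cancel]

lemma transf_arg_sub (T : ℝ) [Fact (0 < T)] (f : AddCircle T → ℂ) (t' : ℝ) :
    transf T f (Complex.arg (fourierCoeff f 1) - t' * (2 * Real.pi) / T) =
      fun x => f (x - (t' : AddCircle T)) := by
  have hT : T ≠ 0 := (Fact.out : 0 < T).ne'
  have hshift : ((deltaPhi T f (Complex.arg (fourierCoeff f 1) - t' * (2 * Real.pi) / T) : ℝ) :
      AddCircle T) = (t' : AddCircle T) := by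
    rw [coe_deltaPhi_s16, theta_arg_sub, AddCircle.coe_toIcoMod_mul_div]
    congr 1
    field_simp [Real.pi_ne_zero]
  funext x
  rw [transf, hshift]

theorem transf_range_eq_shift_orbit_general (T : ℝ) [Fact (0 < T)] (f : AddCircle T → ℂ) :
    {g : AddCircle T → ℂ | ∃ φ : ℝ, g = transf T f φ} =
      {g : AddCircle T → ℂ | ∃ t' : ℝ, ∀ x : AddCircle T, g x = f (x - (t' : AddCircle T))} := by
  ext g
  constructor
  · rintro ⟨φ, rfl⟩
    exact ⟨deltaPhi T f φ, fun _ => rfl⟩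
  · rintro ⟨t', ht⟩
    exact ⟨_, (funext ht).trans (transf_arg_sub T f t').symm⟩

/-- Surjectivity of the transformation onto the shift orbit: the outputs of the
transformation over all angles are exactly the circular translates of `f`. -/
theorem transf_range_eq_shift_orbit (T : ℝ) [Fact (0 < T)] (f : AddCircle T → ℂ)
    (hf : Integrable f AddCircle.haarAddCircle) (hc : fourierCoeff f 1 ≠ 0) :
    {g : AddCircle T → ℂ | ∃ φ : ℝ, g = transf T f φ} =
      {g : AddCircle T → ℂ | ∃ t' : ℝ, ∀ x : AddCircle T, g x = f (x - (t' : AddCircle T))} :=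
  transf_range_eq_shift_orbit_general T f
end
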